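/- arXiv:1307.6867 — 5 statements merged into one kernel-verified Lean document; each statement's English description precedes it below -/
import Mathlib

section
/- For real μ with |μ| ≥ 2, the subgroup of SL₂(ℝ) generated by A = [[1, μ], [0, 1]] and B = [[1, 0], [μ, 1]] is free on the generators A and B. -/
/-!
Ping-pong on `ℝ²`. `A = E₀₁(μ)` and `B = E₁₀(μ)` are elementary transvections, and
`Aⁿ = E₀₁(nμ)` with `|nμ| ≥ 2` for `n ≠ 0`. If the second coordinate of `v` strictly dominates
the first, then `|v₀ + nμ v₁| ≥ 2|v₁| - |v₀| > |v₁|`, so every nontrivial power of `A` maps the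
region `|v₀| < |v₁|` into the region `|v₁| < |v₀|`, and symmetrically for `B`. The ping-pong
lemma for free products then shows that no nontrivial reduced word acts trivially.
-/

open Matrix
open scoped Pointwise

theorem FreeGroup.injective_lift_of_ping_pong_zpow {ι G α : Type*} [Nontrivial ι] [Group G]
    [MulAction G α] (a : ι → G) (X : ι → Set α) (hXnonempty : ∀ i, (X i).Nonempty)
    (hXdisj : Pairwise (Function.onFun Disjoint X))
    (hpp : Pairwise fun i j => ∀ n : ℤ, n ≠ 0 → a i ^ n • X j ⊆ X i) :
    Function.Injective (FreeGroup.lift a) := by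
  have hlift : FreeGroup.lift a = (Monoid.CoprodI.lift fun i => FreeGroup.lift fun _ => a i).comp
      (freeGroupEquivCoprodI (ι := ι)).toMonoidHom := by
    ext i
    simp
  rw [hlift, MonoidHom.coe_comp]
  refine Function.Injective.comp ?_ freeGroupEquivCoprodI.injective
  obtain ⟨i₀⟩ := (inferInstance : Nonempty ι)
  have hcard : 3 ≤ Cardinal.mk (FreeGroup Unit) := by
    rw [FreeGroup.freeGroupUnitEquivInt.cardinal_eq, Cardinal.mk_denumerable]
    exact Cardinal.natCast_le_aleph0
  refine Monoid.CoprodI.lift_injective_of_ping_pong _ (Or.inr ⟨i₀, hcard⟩) X hXnonempty hXdisj ?_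
  intro i j hij h hh
  obtain ⟨n, rfl⟩ : ∃ n : ℤ, FreeGroup.of () ^ n = h :=
    FreeGroup.freeGroupUnitEquivInt.symm.surjective h
  have hn : n ≠ 0 := by
    rintro rfl
    exact hh (zpow_zero _)
  simpa using hpp hij n hn

namespace Matrix.SpecialLinearGroup

variable {ι F : Type*} [DecidableEq ι] [Fintype ι] [CommRing F]

lemma transvection_smul {i j : ι} (hij : i ≠ j) (c : F) (v : ι → F) :
    transvection hij c • v = v + Pi.single i (c * v j) := by
  rw [SpecialLinearGroup.smul_def, smul_eq_mulVec, transvection_coe, add_mulVec, one_mulVec,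
    single_mulVec]
  rfl

lemma transvection_zpow {i j : ι} (hij : i ≠ j) (c : F) (n : ℤ) :
    transvection hij c ^ n = transvection hij (n • c) := by
  let φ : Multiplicative F →* SpecialLinearGroup ι F :=
    { toFun := fun x => transvection hij x.toAdd
      map_one' := transvection_coeff_zero hij
      map_mul' := fun x y => transvection_add hij x.toAdd y.toAdd }
  rw [← toAdd_ofAdd (n • c), ofAdd_zsmul]
  exact (map_zpow φ _ n).symm

lemma coe_transvection_zero_one (c : F) :
    (transvection (zero_ne_one' (Fin 2)) c : Matrix (Fin 2) (Fin 2) F) = !![1, c; 0, 1] := by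
  ext k l
  fin_cases k <;> fin_cases l <;> simp [transvection_coe]

lemma coe_transvection_one_zero (c : F) :
    (transvection (one_ne_zero' (Fin 2)) c : Matrix (Fin 2) (Fin 2) F) = !![1, 0; c, 1] := by
  ext k l
  fin_cases k <;> fin_cases l <;> simp [transvection_coe]

end Matrix.SpecialLinearGroup

def dominantAt {ι : Type*} (F : Type*) [Lattice F] [AddGroup F] (i : ι) : Set (ι → F) :=
  {v | ∀ k ≠ i, |v k| < |v i|}

section Dominance

variable {ι F : Type*}

lemma pairwise_disjoint_dominantAt [AddGroup F] [LinearOrder F] :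
    Pairwise (Function.onFun Disjoint (dominantAt (ι := ι) F)) :=
  fun i j hij => Set.disjoint_left.2 fun _ hi hj => (hi j hij.symm).not_gt (hj i hij)

variable [DecidableEq ι] [CommRing F] [LinearOrder F] [IsStrictOrderedRing F]

lemma single_mem_dominantAt (i : ι) : (Pi.single i 1 : ι → F) ∈ dominantAt F i := by
  intro k hk
  simp [hk]

variable [Fintype ι]

lemma transvection_smul_mem_dominantAt {i j : ι} (hij : i ≠ j) {c : F} (hc : 2 ≤ |c|)
    {v : ι → F} (hv : v ∈ dominantAt F j) :
    SpecialLinearGroup.transvection hij c • v ∈ dominantAt F i := by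
  have hvi : |v i| < |v j| := hv i hij
  have hgrow : |v j| < |v i + c * v j| := calc
    |v j| < 2 * |v j| - |v i| := by linarith
    _ ≤ |c * v j| - |v i| := by rw [abs_mul]; gcongr
    _ ≤ |v i + c * v j| := by rw [add_comm]; exact abs_sub_abs_le_abs_add _ _
  intro k hk
  simp only [SpecialLinearGroup.transvection_smul, Pi.add_apply, Pi.single_eq_same,
    Pi.single_eq_of_ne hk, add_zero]
  rcases eq_or_ne k j with rfl | hkj
  · exact hgrow
  · exact (hv k hkj).trans hgrow

lemma transvection_zpow_smul_dominantAt_subset {i j : ι} (hij : i ≠ j) {c : F} (hc : 2 ≤ |c|)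
    {n : ℤ} (hn : n ≠ 0) :
    SpecialLinearGroup.transvection hij c ^ n • dominantAt F j ⊆ dominantAt F i := by
  rw [SpecialLinearGroup.transvection_zpow, Set.smul_set_subset_iff]
  refine fun v hv => transvection_smul_mem_dominantAt hij ?_ hv
  calc (2 : F) ≤ |c| := hc
    _ ≤ |(n : F)| * |c| :=
      le_mul_of_one_le_left (abs_nonneg c) (by exact_mod_cast Int.one_le_abs hn)
    _ = |n • c| := by rw [zsmul_eq_mul, abs_mul]

end Dominance

/-- Brenner's theorem: for `|μ| ≥ 2`, the parabolic matrices
`A = [[1, μ], [0, 1]]` and `B = [[1, 0], [μ, 1]]` generate a free subgroup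
of `SL₂(ℝ)`, freely on these two generators: the homomorphism from the free
group on two generators sending the generators to `A` and `B` is injective. -/
theorem stmt1 (μ : ℝ) (hμ : 2 ≤ |μ|)
    (A B : Matrix.SpecialLinearGroup (Fin 2) ℝ)
    (hA : (A : Matrix (Fin 2) (Fin 2) ℝ) = !![1, μ; 0, 1])
    (hB : (B : Matrix (Fin 2) (Fin 2) ℝ) = !![1, 0; μ, 1]) :
    Function.Injective (FreeGroup.lift ![A, B] : FreeGroup (Fin 2) →* Matrix.SpecialLinearGroup (Fin 2) ℝ) := by
  have hA' : A = SpecialLinearGroup.transvection _ μ :=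
    Subtype.ext (hA.trans (SpecialLinearGroup.coe_transvection_zero_one μ).symm)
  have hB' : B = SpecialLinearGroup.transvection _ μ :=
    Subtype.ext (hB.trans (SpecialLinearGroup.coe_transvection_one_zero μ).symm)
  have hgen : ∀ i j (hij : i ≠ j), ![A, B] i = SpecialLinearGroup.transvection hij μ := by
    intro i j hij
    fin_cases i <;> fin_cases j
    · exact absurd rfl hij
    · exact hA'
    · exact hB'
    · exact absurd rfl hij
  refine FreeGroup.injective_lift_of_ping_pong_zpow _ (dominantAt ℝ)
    (fun i => ⟨_, single_mem_dominantAt i⟩) pairwise_disjoint_dominantAt fun i j hij n hn => ?_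
  rw [hgen i j hij]
  exact transvection_zpow_smul_dominantAt_subset hij hμ hn
end

section
/- If h₁, h₂ are free generators of a free subgroup of SL₂(ℝ), then for any R ∈ ℕ the elements g_r = h₁^r · h₂^r for r = 1, …, R freely generate a free subgroup of rank R. -/
/-! The substitution `g_r ↦ x^r y^r` embeds the free group on `R` letters into the free group
on `x, y`. Multiplying out a reduced word in the `g_r^{±1}`, cancellation can only happen
between adjacent blocks `x^r y^r · y^{-s} x^{-s}` or `y^{-r} x^{-r} · x^s y^s`, and since
`r ≠ s` it stops at the nonzero power `y^{r-s}` (resp. `x^{s-r}`). Hence the reduced image of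
a word starting with `g_r` (resp. `g_r⁻¹`) still begins with `x^r` (resp. `y^{-r}`) followed
by a nonzero power of the other generator, and in particular is nontrivial. Composing with the
injective map `F(x, y) → SL₂(ℝ)` gives the theorem. -/

theorem cond_ne_cond_swap {β : Type*} {a b : β} (hab : a ≠ b) (e : Bool) :
    cond e a b ≠ cond e b a := by
  cases e
  exacts [hab.symm, hab]

theorem cond_self_neg_ne_zero {G : Type*} [AddGroup G] {x : G} (hx : x ≠ 0) (e : Bool) :
    cond e x (-x) ≠ 0 := by
  cases e <;> simpa

namespace FreeGroup

variable {α ι : Type*}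

def powPairHom (a b : α) (n : ι → ℤ) : FreeGroup ι →* FreeGroup α :=
  lift fun i => of a ^ n i * of b ^ n i

theorem powPairHom_mk_cons (a b : α) (n : ι → ℤ) (i : ι) (e : Bool) (w : List (ι × Bool)) :
    powPairHom a b n (mk ((i, e) :: w)) =
      of (cond e a b) ^ cond e (n i) (-n i) *
        (of (cond e b a) ^ cond e (n i) (-n i) * powPairHom a b n (mk w)) := by
  cases e <;> simp [powPairHom, lift_mk, mul_assoc]

variable [DecidableEq α]

theorem exists_toWord_of_zpow (a : α) (k : ℤ) :
    ∃ e, (of a ^ k).toWord = List.replicate k.natAbs (a, e) := by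
  obtain ⟨n, rfl | rfl⟩ := Int.eq_nat_or_neg k
  · exact ⟨true, by simp [toWord_of_pow]⟩
  · exact ⟨false, by simp [toWord_inv, toWord_of_pow, invRev]⟩

def headGen (g : FreeGroup α) : Option α := g.toWord.head?.map Prod.fst

@[simp] theorem headGen_one : headGen (1 : FreeGroup α) = none := by
  simp [headGen]

theorem ne_one_of_headGen_eq_some {g : FreeGroup α} {a : α} (h : headGen g = some a) :
    g ≠ 1 := by
  rintro rfl
  simp at h

theorem headGen_of_zpow_mul {a : α} {k : ℤ} {g : FreeGroup α} (hk : k ≠ 0)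
    (hg : headGen g ≠ some a) : headGen (of a ^ k * g) = some a := by
  obtain ⟨e, he⟩ := exists_toWord_of_zpow a k
  have hred : IsReduced ((of a ^ k).toWord ++ g.toWord) := by
    rw [IsReduced, List.isChain_append, he]
    refine ⟨List.isChain_replicate_of_rel _ fun _ => rfl, isReduced_toWord, ?_⟩
    intro x hx y hy hxy
    simp only [List.getLast?_replicate, Int.natAbs_eq_zero, hk, if_false,
      Option.mem_some_iff] at hx
    subst hx
    exact absurd (by simp [headGen, Option.mem_def.mp hy, ← hxy]) hg
  rw [headGen, toWord_mul, hred.reduce_eq, he, List.head?_append, List.head?_replicate]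
  simp [hk]

def HasLeadingSyllables (c d : α) (k : ℤ) (g : FreeGroup α) : Prop :=
  ∃ m : ℤ, m ≠ 0 ∧ ∃ h, headGen h ≠ some d ∧ g = of c ^ k * (of d ^ m * h)

theorem HasLeadingSyllables.headGen_eq {c d : α} {k : ℤ} {g : FreeGroup α} (hcd : c ≠ d)
    (hk : k ≠ 0) (hg : HasLeadingSyllables c d k g) : headGen g = some c := by
  obtain ⟨m, hm, h, hh, rfl⟩ := hg
  refine headGen_of_zpow_mul hk ?_
  rw [headGen_of_zpow_mul hm hh]
  exact (Option.some_injective _).ne hcd.symm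

variable {a b : α} {n : ι → ℤ}

theorem hasLeadingSyllables_powPairHom_mk (hab : a ≠ b) (hn : Function.Injective n)
    (hn0 : ∀ i, n i ≠ 0) (i : ι) (e : Bool) (w : List (ι × Bool))
    (hw : IsReduced ((i, e) :: w)) :
    HasLeadingSyllables (cond e a b) (cond e b a) (cond e (n i) (-n i))
      (powPairHom a b n (mk ((i, e) :: w))) := by
  induction w generalizing i e with
  | nil =>
    exact ⟨_, cond_self_neg_ne_zero (hn0 i) e, 1, by simp,
      by simp [powPairHom_mk_cons, ← one_eq_mk]⟩
  | cons p w ih =>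
    obtain ⟨j, e'⟩ := p
    obtain ⟨hij, hw⟩ := isReduced_cons_cons.mp hw
    have htail := ih j e' hw
    rw [powPairHom_mk_cons]
    rcases eq_or_ne e' e with rfl | he
    · refine ⟨_, cond_self_neg_ne_zero (hn0 i) e', _, ?_, rfl⟩
      rw [htail.headGen_eq (cond_ne_cond_swap hab e') (cond_self_neg_ne_zero (hn0 j) e')]
      exact (Option.some_injective _).ne (cond_ne_cond_swap hab e')
    · obtain rfl : e' = !e := by cases e <;> cases e' <;> simp_all
      obtain ⟨m, hm, h, hh, hg⟩ := htail
      simp only [Bool.cond_not] at hg hh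
      -- the two adjacent powers of `cond e b a` merge, and their sum is `±(n i - n j) ≠ 0`
      refine ⟨cond e (n i) (-n i) + cond e (-n j) (n j), ?_, of (cond e a b) ^ m * h, ?_, ?_⟩
      · have : n i ≠ n j := hn.ne fun h => he (hij h).symm
        cases e <;> simp <;> omega
      · rw [headGen_of_zpow_mul hm hh]
        exact (Option.some_injective _).ne (cond_ne_cond_swap hab e)
      · rw [hg, zpow_add]
        simp only [mul_assoc]

theorem powPairHom_injective (hab : a ≠ b) (hn : Function.Injective n) (hn0 : ∀ i, n i ≠ 0) :
    Function.Injective (powPairHom a b n) := by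
  classical
  rw [injective_iff_map_eq_one]
  intro z hz
  rw [← mk_toWord (x := z)] at hz ⊢
  rcases hw : z.toWord with _ | ⟨⟨i, e⟩, w⟩
  · rfl
  · rw [hw] at hz
    have := hasLeadingSyllables_powPairHom_mk hab hn hn0 i e w (hw ▸ isReduced_toWord)
    exact absurd hz (ne_one_of_headGen_eq_some
      (this.headGen_eq (cond_ne_cond_swap hab e) (cond_self_neg_ne_zero (hn0 i) e)))

end FreeGroup

/-- If `h₁, h₂` freely generate a free subgroup of `SL₂(ℝ)`, then for any `R`,
the elements `g_r = h₁^r h₂^r`, `r = 1, …, R`, freely generate a free subgroup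
of rank `R`. -/
theorem stmt2 (h₁ h₂ : Matrix.SpecialLinearGroup (Fin 2) ℝ)
    (hfree : Function.Injective
      (FreeGroup.lift ![h₁, h₂] : FreeGroup (Fin 2) →* Matrix.SpecialLinearGroup (Fin 2) ℝ))
    (R : ℕ) :
    Function.Injective
      (FreeGroup.lift (fun r : Fin R => h₁ ^ ((r : ℕ) + 1) * h₂ ^ ((r : ℕ) + 1)) :
        FreeGroup (Fin R) →* Matrix.SpecialLinearGroup (Fin 2) ℝ) := by
  have hcomp : (FreeGroup.lift ![h₁, h₂]).comp
      (FreeGroup.powPairHom 0 1 fun r : Fin R => (r : ℤ) + 1) =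
      FreeGroup.lift (fun r : Fin R => h₁ ^ ((r : ℕ) + 1) * h₂ ^ ((r : ℕ) + 1)) := by
    refine FreeGroup.ext_hom _ _ fun r => ?_
    simp only [FreeGroup.powPairHom, MonoidHom.comp_apply, FreeGroup.lift_apply_of, map_mul,
      map_zpow]
    norm_cast
  rw [← hcomp, MonoidHom.coe_comp]
  refine hfree.comp (FreeGroup.powPairHom_injective (by decide) ?_ fun r => by positivity)
  intro r s h
  exact Fin.ext (by simpa using h)
end

section
/- Let λ be an algebraic number of degree d whose conjugates all have absolute value at most H+1, and suppose some positive integer N ≤ H satisfies that Nλ is an algebraic integer. If f ∈ ℤ[X] has degree at most D and coefficients bounded in absolute value by M, and f(λ) ≠ 0, then |f(λ)| ≥ N^{-dD} · ((D+1)·M·(H+1)^D)^{-(d-1)}. -/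
/-!
Put `x = N^D f(λ)` in `K = ℚ(λ)`. Since `Nλ` is an algebraic integer, `x = ∑ fᵢ N^(D-i) (Nλ)^i`
is one, and it is nonzero, so `|Norm_{K/ℚ} x| ≥ 1`. The norm is the product of `N^D f(λⱼ)` over
the conjugates `λⱼ`; each factor other than `f(λ)` has `|f(λⱼ)| ≤ (D+1) M (H+1)^D`.
-/

open Polynomial IntermediateField NumberField

theorem IsIntegral.algebraMap_pow_mul_aeval {R A : Type*} [CommRing R] [CommRing A] [Algebra R A]
    {r : R} {a : A} (h : IsIntegral R (algebraMap R A r * a)) {f : R[X]} {D : ℕ}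
    (hD : f.natDegree ≤ D) : IsIntegral R (algebraMap R A r ^ D * aeval a f) := by
  have hscale : algebraMap R A r ^ f.natDegree * aeval a f =
      aeval (algebraMap R A r * a) (f.scaleRoots r) := by
    rw [aeval_def, aeval_def, scaleRoots_eval₂_mul]
  have hint : IsIntegral R (aeval (algebraMap R A r * a) (f.scaleRoots r)) := by
    rw [← aeval_subalgebra_coe (f.scaleRoots r) (integralClosure R A) ⟨_, h⟩]
    exact (aeval (⟨_, h⟩ : integralClosure R A) (f.scaleRoots r)).2
  rw [← Nat.sub_add_cancel hD, pow_add, mul_assoc, hscale]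
  exact (isIntegral_algebraMap.pow _).mul hint

theorem NumberField.one_le_prod_norm_embeddings {K : Type*} [Field K] [NumberField K]
    {x : 𝓞 K} (hx : x ≠ 0) : 1 ≤ ∏ σ : K →ₐ[ℚ] ℂ, ‖σ x‖ :=
  calc
    (1 : ℝ) ≤ |(Algebra.norm ℤ x : ℝ)| := by
      exact_mod_cast Int.one_le_abs (Algebra.norm_ne_zero_iff.mpr hx)
    _ = ‖algebraMap ℚ ℂ (Algebra.norm ℚ (x : K))‖ := by
      rw [← Algebra.coe_norm_int]; simp
    _ = ∏ σ : K →ₐ[ℚ] ℂ, ‖σ x‖ := by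
      rw [Algebra.norm_eq_prod_embeddings, norm_prod]

theorem IntermediateField.prod_algHom_adjoin_gen {F E K M : Type*} [Field F] [Field E] [Field K]
    [Algebra F E] [Algebra F K] [CommMonoid M] {α : E} [Fintype (F⟮α⟯ →ₐ[F] K)]
    (hα : IsIntegral F α) (hnodup : ((minpoly F α).aroots K).Nodup) (u : K → M) :
    ∏ σ : F⟮α⟯ →ₐ[F] K, u (σ (AdjoinSimple.gen F α)) = (((minpoly F α).aroots K).map u).prod := by
  classical
  let e := algHomAdjoinIntegralEquiv F (K := K) hα
  have hgen (σ : F⟮α⟯ →ₐ[F] K) : σ (AdjoinSimple.gen F α) = e σ := by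
    conv_lhs => rw [← e.symm_apply_apply σ]
    exact algHomAdjoinIntegralEquiv_symm_apply_gen F hα (e σ)
  rw [Fintype.prod_equiv e _ (fun t => u t) (fun σ => congrArg u (hgen σ)),
    ← Finset.prod_subtype _ (fun _ => Multiset.mem_toFinset) u, Finset.prod_eq_multiset_prod,
    Multiset.toFinset_val, Multiset.dedup_eq_self.mpr hnodup]

theorem norm_aeval_le_of_natDegree_le {f : ℤ[X]} {D : ℕ} (hD : f.natDegree ≤ D) {M : ℝ}
    (hM : ∀ i, |(f.coeff i : ℝ)| ≤ M) {z : ℂ} {R : ℝ} (hR : 1 ≤ R) (hz : ‖z‖ ≤ R) :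
    ‖aeval z f‖ ≤ (D + 1) * M * R ^ D := by
  have hM0 : 0 ≤ M := (abs_nonneg _).trans (hM 0)
  rw [aeval_eq_sum_range' (Nat.lt_succ_of_le hD)]
  calc ‖∑ i ∈ Finset.range (D + 1), f.coeff i • z ^ i‖
      ≤ ∑ i ∈ Finset.range (D + 1), ‖f.coeff i • z ^ i‖ := norm_sum_le _ _
    _ ≤ ∑ i ∈ Finset.range (D + 1), M * R ^ D := by
      refine Finset.sum_le_sum fun i hi => ?_
      rw [zsmul_eq_mul, norm_mul, norm_pow, Complex.norm_intCast]
      have hzi : ‖z‖ ^ i ≤ R ^ D :=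
        (pow_le_pow_left₀ (norm_nonneg z) hz i).trans
          (pow_le_pow_right₀ hR (Nat.lt_succ_iff.mp (Finset.mem_range.mp hi)))
      exact mul_le_mul (hM i) hzi (by positivity) hM0
    _ = (D + 1) * M * R ^ D := by
      rw [Finset.sum_const, Finset.card_range, nsmul_eq_mul]; push_cast; ring

theorem Fintype.prod_le_mul_pow_card_sub_one {ι R : Type*} [Fintype ι] [DecidableEq ι]
    [CommSemiring R] [PartialOrder R] [IsOrderedRing R] {g : ι → R} (hg : ∀ i, 0 ≤ g i) {B : R}
    (hB : ∀ i, g i ≤ B) (i₀ : ι) :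
    ∏ i, g i ≤ g i₀ * B ^ (Fintype.card ι - 1) := by
  rw [← Finset.mul_prod_erase _ _ (Finset.mem_univ i₀)]
  gcongr
  · exact hg i₀
  calc ∏ i ∈ Finset.univ.erase i₀, g i ≤ ∏ _i ∈ Finset.univ.erase i₀, B :=
        Finset.prod_le_prod (fun i _ => hg i) (fun i _ => hB i)
    _ = B ^ (Fintype.card ι - 1) := by
      rw [Finset.prod_const, Finset.card_erase_of_mem (Finset.mem_univ _), Finset.card_univ]

theorem one_le_prod_aroots_natCast_pow_mul_norm_aeval {lam : ℂ} (halg : IsAlgebraic ℚ lam)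
    {N : ℕ} (hN : 0 < N) (hint : IsIntegral ℤ ((N : ℂ) * lam)) {f : ℤ[X]} {D : ℕ}
    (hD : f.natDegree ≤ D) (hf : aeval lam f ≠ 0) :
    1 ≤ (((minpoly ℚ lam).aroots ℂ).map fun z => (N : ℝ) ^ D * ‖aeval z f‖).prod := by
  have hlam : IsIntegral ℚ lam := halg.isIntegral
  have : FiniteDimensional ℚ ℚ⟮lam⟯ := adjoin.finiteDimensional hlam
  have : NumberField ℚ⟮lam⟯ := {}
  set α := AdjoinSimple.gen ℚ lam
  have hNα : IsIntegral ℤ (algebraMap ℤ ℚ⟮lam⟯ N * α) := by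
    rw [← isIntegral_algebraMap_iff (algebraMap ℚ⟮lam⟯ ℂ).injective]
    simpa [α, AdjoinSimple.algebraMap_gen] using hint
  let x : 𝓞 ℚ⟮lam⟯ := ⟨_, hNα.algebraMap_pow_mul_aeval hD⟩
  have hσx (σ : ℚ⟮lam⟯ →ₐ[ℚ] ℂ) : σ x = (N : ℂ) ^ D * aeval (σ α) f := by
    have hσf : σ (aeval α f) = aeval (σ α) f :=
      (aeval_algHom_apply (σ.restrictScalars ℤ) α f).symm
    simp [x, hσf]
  have hx0 : x ≠ 0 := by
    intro hx
    have h := hσx (IsScalarTower.toAlgHom ℚ ℚ⟮lam⟯ ℂ)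
    rw [hx, IsScalarTower.coe_toAlgHom', AdjoinSimple.algebraMap_gen] at h
    simp only [map_zero, zero_eq_mul, pow_eq_zero_iff', Nat.cast_eq_zero] at h
    exact h.elim (fun h => hN.ne' h.1) hf
  have hnodup : ((minpoly ℚ lam).aroots ℂ).Nodup :=
    nodup_roots (minpoly.irreducible hlam).separable.map
  calc 1 ≤ ∏ σ : ℚ⟮lam⟯ →ₐ[ℚ] ℂ, ‖σ x‖ := one_le_prod_norm_embeddings hx0
    _ = ∏ σ : ℚ⟮lam⟯ →ₐ[ℚ] ℂ, (N : ℝ) ^ D * ‖aeval (σ α) f‖ := by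
      simp only [hσx, norm_mul, norm_pow, Complex.norm_natCast]
    _ = _ := prod_algHom_adjoin_gen hlam hnodup fun z => (N : ℝ) ^ D * ‖aeval z f‖

theorem stmt5_general (lam : ℂ) (halg : IsAlgebraic ℚ lam)
    (d : ℕ) (hd0 : 0 < d)
    (conj : Fin d → ℂ) (hconj0 : conj ⟨0, hd0⟩ = lam)
    (hroots : ((minpoly ℚ lam).aroots ℂ) = (Finset.univ.val.map conj))
    (H : ℕ) (hbound : ∀ j, ‖conj j‖ ≤ (H : ℝ) + 1)
    (N : ℕ) (hN : 0 < N) (hint : IsIntegral ℤ ((N : ℂ) * lam))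
    (f : Polynomial ℤ) (D : ℕ) (hD : f.natDegree ≤ D)
    (M : ℝ) (hM : ∀ i, |(f.coeff i : ℝ)| ≤ M)
    (hf : Polynomial.aeval lam f ≠ 0) :
    ‖Polynomial.aeval lam f‖ ≥
      ((N : ℝ) ^ (d * D))⁻¹ * ((((D : ℝ) + 1) * M * ((H : ℝ) + 1) ^ D) ^ (d - 1))⁻¹ := by
  set B := ((D : ℝ) + 1) * M * ((H : ℝ) + 1) ^ D
  have hconj (j : Fin d) : ‖aeval (conj j) f‖ ≤ B :=
    norm_aeval_le_of_natDegree_le hD hM (by simp) (hbound j)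
  have hprod := Fintype.prod_le_mul_pow_card_sub_one (fun j => norm_nonneg _) hconj ⟨0, hd0⟩
  rw [Fintype.card_fin, hconj0] at hprod
  have hmain : 1 ≤ ((N : ℝ) ^ (d * D) * B ^ (d - 1)) * ‖aeval lam f‖ := calc
    1 ≤ (((minpoly ℚ lam).aroots ℂ).map fun z => (N : ℝ) ^ D * ‖aeval z f‖).prod :=
      one_le_prod_aroots_natCast_pow_mul_norm_aeval halg hN hint hD hf
    _ = ∏ j, (N : ℝ) ^ D * ‖aeval (conj j) f‖ := by rw [hroots, Multiset.map_map]; rfl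
    _ = (N : ℝ) ^ (d * D) * ∏ j, ‖aeval (conj j) f‖ := by
      rw [Finset.prod_mul_distrib, Finset.prod_const, Finset.card_fin, ← pow_mul, mul_comm D d]
    _ ≤ (N : ℝ) ^ (d * D) * (‖aeval lam f‖ * B ^ (d - 1)) := by gcongr
    _ = _ := by ring
  have hpos := pos_of_mul_pos_left (one_pos.trans_le hmain) (norm_nonneg _)
  rwa [ge_iff_le, ← mul_inv, inv_le_iff_one_le_mul₀' hpos]

/-- Let `λ` be an algebraic number of degree `d` whose conjugates all have
absolute value at most `H+1`, and suppose some positive integer `N ≤ H` is such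
that `Nλ` is an algebraic integer.  If `f ∈ ℤ[X]` has degree at most `D` and
coefficients bounded by `M`, and `f(λ) ≠ 0`, then
`|f(λ)| ≥ N^{-dD} ((D+1) M (H+1)^D)^{-(d-1)}`. -/
theorem stmt5 (lam : ℂ) (halg : IsAlgebraic ℚ lam)
    (d : ℕ) (hd : d = (minpoly ℚ lam).natDegree) (hd0 : 0 < d)
    (conj : Fin d → ℂ) (hconj0 : conj ⟨0, hd0⟩ = lam)
    (hroots : ((minpoly ℚ lam).aroots ℂ) = (Finset.univ.val.map conj))
    (H : ℕ) (hbound : ∀ j, ‖conj j‖ ≤ (H : ℝ) + 1)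
    (N : ℕ) (hN : 0 < N) (hNH : N ≤ H) (hint : IsIntegral ℤ ((N : ℂ) * lam))
    (f : Polynomial ℤ) (D : ℕ) (hD : f.natDegree ≤ D)
    (M : ℝ) (hM : ∀ i, |(f.coeff i : ℝ)| ≤ M)
    (hf : Polynomial.aeval lam f ≠ 0) :
    ‖Polynomial.aeval lam f‖ ≥
      ((N : ℝ) ^ (d * D))⁻¹ * ((((D : ℝ) + 1) * M * ((H : ℝ) + 1) ^ D) ^ (d - 1))⁻¹ :=
  stmt5_general lam halg d hd0 conj hconj0 hroots H hbound N hN hint f D hD M hM hf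
end

section
/- Let T be a linear operator on L²(𝕋) with ‖T‖_{L∞→L∞} ≤ 1 and ‖Tf‖₂ ≤ (1−γ)‖f‖₂ whenever f is orthogonal to the span V of {e(nθ) : |n| < K}, where 0 < γ < 1. Then for all m ≥ 1 and all f ∈ L²(𝕋), ‖T^m f‖₂ ≤ (√(2K)/γ + 1)·‖f‖₂. -/
/-!
Split `f = Pf + (f - Pf)` with `P` the orthogonal projection onto `V`. On the finite-dimensional
space `V` of trigonometric polynomials of degree `< K` the `L²` and `L∞` norms are comparable,
`‖v‖_∞ ≤ √(2K) ‖v‖₂`, so the `L∞`-contractivity of `T` gives `‖T^k Pf‖₂ ≤ √(2K) ‖f‖₂` for every `k`.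
The component `f - Pf` is first contracted by `1 - γ` and then handled by induction on `m`:
`C + (C/γ + 1)(1 - γ) ≤ C/γ + 1` for `C = √(2K)`.
-/

open MeasureTheory AddCircle

instance : Fact ((0 : ℝ) < 1) := ⟨one_pos⟩

open scoped InnerProductSpace

theorem Submodule.norm_pow_apply_le_of_contract_orthogonal {𝕜 E : Type*} [RCLike 𝕜]
    [NormedAddCommGroup E] [InnerProductSpace 𝕜 E] (V : Submodule 𝕜 E)
    [V.HasOrthogonalProjection] (T : Module.End 𝕜 E) {γ C : ℝ} (hγ0 : 0 < γ) (hγ1 : γ ≤ 1)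
    (hC : 0 ≤ C) (hTV : ∀ k, ∀ v ∈ V, ‖(T ^ k) v‖ ≤ C * ‖v‖)
    (hTgap : ∀ f ∈ Vᗮ, ‖T f‖ ≤ (1 - γ) * ‖f‖) (m : ℕ) (f : E) :
    ‖(T ^ m) f‖ ≤ (C / γ + 1) * ‖f‖ := by
  induction m generalizing f with
  | zero =>
    simpa using le_mul_of_one_le_left (norm_nonneg f) (le_add_of_nonneg_left (by positivity))
  | succ m ih =>
    set p := V.starProjection f
    have hp : ‖(T ^ (m + 1)) p‖ ≤ C * ‖f‖ :=
      (hTV _ p (V.starProjection_apply_mem f)).trans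
        (by gcongr; exact V.norm_starProjection_apply_le f)
    have hq : ‖(T ^ (m + 1)) (f - p)‖ ≤ (C / γ + 1) * ((1 - γ) * ‖f‖) := by
      rw [pow_succ, Module.End.mul_apply]
      refine (ih _).trans (mul_le_mul_of_nonneg_left ?_ (by positivity))
      refine (hTgap _ (V.sub_starProjection_mem_orthogonal f)).trans ?_
      rw [← V.starProjection_orthogonal_val]
      exact mul_le_mul_of_nonneg_left (Vᗮ.norm_starProjection_apply_le f) (by linarith)
    calc ‖(T ^ (m + 1)) f‖ = ‖(T ^ (m + 1)) p + (T ^ (m + 1)) (f - p)‖ := by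
          rw [← map_add, add_sub_cancel]
      _ ≤ C * ‖f‖ + (C / γ + 1) * ((1 - γ) * ‖f‖) := (norm_add_le _ _).trans (add_le_add hp hq)
      _ = (C / γ + 1 - γ) * ‖f‖ := by field_simp; ring
      _ ≤ (C / γ + 1) * ‖f‖ := by gcongr; linarith

theorem LinearMap.pow_apply_le_of_apply_le {R M β : Type*} [Semiring R] [AddCommMonoid M]
    [Module R M] [Preorder β] (T : Module.End R M) (Φ : M → β) (hT : ∀ x, Φ (T x) ≤ Φ x)
    (k : ℕ) (x : M) : Φ ((T ^ k) x) ≤ Φ x := by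
  induction k generalizing x with
  | zero => simp
  | succ k ih => rw [pow_succ, Module.End.mul_apply]; exact (ih _).trans (hT x)

namespace MeasureTheory.Lp

variable {α : Type*} {m : MeasurableSpace α} {μ : Measure α} {p : ENNReal}

theorem ofReal_norm_le_eLpNorm_top {E : Type*} [NormedAddCommGroup E] [IsProbabilityMeasure μ]
    (f : Lp E p μ) : ENNReal.ofReal ‖f‖ ≤ eLpNorm f ⊤ μ := by
  rw [norm_def, ENNReal.ofReal_toReal (eLpNorm_ne_top f)]
  exact eLpNorm_le_eLpNorm_of_exponent_le le_top (Lp.aestronglyMeasurable f)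

variable {𝕜 : Type*} [RCLike 𝕜]

theorem eLpNorm_top_sum_smul_le {ι : Type*} (s : Finset ι) (c : ι → 𝕜) (e : ι → Lp 𝕜 p μ) :
    eLpNorm (↑↑(∑ i ∈ s, c i • e i)) ⊤ μ ≤ ∑ i ∈ s, ‖c i‖ₑ * eLpNorm (e i) ⊤ μ := by
  have hsub : ∀ f g : Lp 𝕜 p μ, eLpNorm (↑↑(f + g)) ⊤ μ ≤ eLpNorm f ⊤ μ + eLpNorm g ⊤ μ :=
    fun f g => (eLpNorm_congr_ae (coeFn_add f g)).trans_le
      (eLpNorm_add_le (Lp.aestronglyMeasurable f) (Lp.aestronglyMeasurable g) le_top)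
  refine (Finset.le_sum_of_subadditive (fun f : Lp 𝕜 p μ => eLpNorm f ⊤ μ)
    ((eLpNorm_congr_ae (coeFn_zero 𝕜 p μ)).trans_le (by simp)) hsub s _).trans_eq ?_
  refine Finset.sum_congr rfl fun i _ => ?_
  rw [eLpNorm_congr_ae (coeFn_smul (c i) (e i)), eLpNorm_const_smul]

end MeasureTheory.Lp

theorem Orthonormal.eLpNorm_top_le_of_mem_span {α ι 𝕜 : Type*} [RCLike 𝕜] [Fintype ι]
    {m : MeasurableSpace α} {μ : Measure α} {e : ι → Lp 𝕜 2 μ} (he : Orthonormal 𝕜 e)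
    (hbdd : ∀ i, eLpNorm (e i) ⊤ μ ≤ 1) {v : Lp 𝕜 2 μ}
    (hv : v ∈ Submodule.span 𝕜 (Set.range e)) :
    eLpNorm v ⊤ μ ≤ ENNReal.ofReal (√(Fintype.card ι) * ‖v‖) := by
  obtain ⟨c, rfl⟩ := (Submodule.mem_span_range_iff_exists_fun 𝕜).1 hv
  set v := ∑ i, c i • e i
  have hbessel : ∑ i, ‖c i‖ ^ 2 ≤ ‖v‖ ^ 2 := by
    have hc : ∀ i, ⟪e i, v⟫_𝕜 = c i := he.inner_right_fintype c
    simpa only [hc] using he.sum_inner_products_le v (s := Finset.univ)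
  have hcauchy : ∑ i, ‖c i‖ ≤ √(Fintype.card ι) * ‖v‖ := by
    have hcs := Real.sum_sqrt_mul_sqrt_le Finset.univ (fun _ => zero_le_one) fun i => sq_nonneg ‖c i‖
    simp only [Real.sqrt_one, one_mul, Real.sqrt_sq (norm_nonneg _), Finset.sum_const,
      Finset.card_univ, nsmul_eq_mul, mul_one] at hcs
    have hsqrt : √(∑ i, ‖c i‖ ^ 2) ≤ ‖v‖ := (Real.sqrt_le_left (norm_nonneg v)).2 hbessel
    exact hcs.trans (by gcongr)
  calc eLpNorm v ⊤ μ ≤ ∑ i, ‖c i‖ₑ * eLpNorm (e i) ⊤ μ := Lp.eLpNorm_top_sum_smul_le _ c e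
    _ ≤ ∑ i, ‖c i‖ₑ := by gcongr with i; exact mul_le_of_le_one_right' (hbdd i)
    _ = ENNReal.ofReal (∑ i, ‖c i‖) := by
      rw [ENNReal.ofReal_sum_of_nonneg fun i _ => norm_nonneg _]; simp [ofReal_norm]
    _ ≤ _ := ENNReal.ofReal_le_ofReal hcauchy

theorem Int.card_Ioo_neg_le (K : ℕ) :
    (Fintype.card (Finset.Ioo (-(K : ℤ)) K) : ℝ) ≤ 2 * K := by
  rw [Fintype.card_coe, Int.card_Ioo]
  exact_mod_cast (by omega : (K - -K - 1 : ℤ).toNat ≤ 2 * K)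

namespace AddCircle

variable {T : ℝ} [Fact (0 < T)] {p : ENNReal} [Fact (1 ≤ p)]

theorem eLpNorm_fourierLp_top_le_one (n : ℤ) :
    eLpNorm (fourierLp (T := T) p n) ⊤ haarAddCircle ≤ 1 := by
  rw [eLpNorm_congr_ae (coeFn_fourierLp p n)]
  simpa using eLpNorm_le_of_ae_bound (p := ⊤) (μ := haarAddCircle) (f := fourier (T := T) n)
    (C := 1) (.of_forall fun x => (Circle.norm_coe _).le)

theorem setOf_fourierLp_abs_lt_eq_range (K : ℕ) :
    {g | ∃ n : ℤ, |n| < (K : ℤ) ∧ g = fourierLp (T := T) p n} =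
      Set.range fun n : Finset.Ioo (-(K : ℤ)) K => fourierLp p (n : ℤ) := by
  ext g
  simp [abs_lt, eq_comm]

end AddCircle

/-- Let `T` be a linear operator on `L²(𝕋)` which is an `L∞`-contraction and
contracts by a factor `1-γ` on the orthogonal complement of
`V = span{e(nθ) : |n| < K}`.  Then `‖T^m f‖₂ ≤ (√(2K)/γ + 1)‖f‖₂` for all
`m ≥ 1` and all `f ∈ L²(𝕋)`. -/
theorem stmt8 (K : ℕ) (γ : ℝ) (hγ0 : 0 < γ) (hγ1 : γ < 1)
    (T : Lp ℂ 2 (haarAddCircle (T := 1)) →ₗ[ℂ] Lp ℂ 2 (haarAddCircle (T := 1)))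
    (hTinf : ∀ f : Lp ℂ 2 (haarAddCircle (T := 1)),
      eLpNorm (↑↑(T f)) ⊤ (haarAddCircle (T := 1)) ≤
        eLpNorm (↑↑f) ⊤ (haarAddCircle (T := 1)))
    (V : Submodule ℂ (Lp ℂ 2 (haarAddCircle (T := 1))))
    (hV : V = Submodule.span ℂ {g | ∃ n : ℤ, |n| < (K : ℤ) ∧ g = fourierLp 2 n})
    (hTgap : ∀ f ∈ Vᗮ, ‖T f‖ ≤ (1 - γ) * ‖f‖) :
    ∀ m : ℕ, 1 ≤ m → ∀ f : Lp ℂ 2 (haarAddCircle (T := 1)),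
      ‖(T ^ m) f‖ ≤ (Real.sqrt (2 * K) / γ + 1) * ‖f‖ := by
  intro m _ f
  rw [setOf_fourierLp_abs_lt_eq_range] at hV
  have : FiniteDimensional ℂ V := by
    rw [hV]; exact FiniteDimensional.span_of_finite ℂ (Set.finite_range _)
  refine Submodule.norm_pow_apply_le_of_contract_orthogonal _ T hγ0 hγ1.le (by positivity)
    (fun k v hv => ?_) hTgap m f
  rw [hV] at hv
  have he : Orthonormal ℂ fun n : Finset.Ioo (-(K : ℤ)) K => fourierLp (T := 1) 2 (n : ℤ) :=
    orthonormal_fourier.comp _ Subtype.val_injective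
  have hv_top := he.eLpNorm_top_le_of_mem_span (fun n => eLpNorm_fourierLp_top_le_one _) hv
  rw [← ENNReal.ofReal_le_ofReal_iff (by positivity)]
  calc ENNReal.ofReal ‖(T ^ k) v‖ ≤ eLpNorm ((T ^ k) v) ⊤ haarAddCircle :=
        Lp.ofReal_norm_le_eLpNorm_top _
    _ ≤ eLpNorm v ⊤ haarAddCircle :=
        T.pow_apply_le_of_apply_le (fun g => eLpNorm g ⊤ _) hTinf k v
    _ ≤ _ := hv_top.trans (ENNReal.ofReal_le_ofReal (by gcongr; exact Int.card_Ioo_neg_le K))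
end

section
/- For g = [[a,b],[c,d]] ∈ SL₂(ℝ) and the projective action τ_g on angles, the s-th derivative satisfies |τ_g^{(s)}(θ)| ≤ c_s · ‖g‖^{2s} for all θ ∈ 𝕋 and s ≥ 1, where c_s depends only on s. -/
open Real

/-- The ℓ²-operator norm of a 2×2 real matrix. -/
noncomputable def opNorm2 (g : Matrix (Fin 2) (Fin 2) ℝ) : ℝ :=
  ‖LinearMap.toContinuousLinearMap (Matrix.toEuclideanLin g)‖


noncomputable def Qf (a b c d θ : ℝ) : ℝ :=
  (a * Real.cos θ + b * Real.sin θ)^2 + (c * Real.cos θ + d * Real.sin θ)^2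
noncomputable def Wf (a b c d θ : ℝ) : ℝ :=
  (a * Real.cos θ + b * Real.sin θ) * (b * Real.cos θ - a * Real.sin θ)
  + (c * Real.cos θ + d * Real.sin θ) * (d * Real.cos θ - c * Real.sin θ)
noncomputable def Pf (a b c d θ : ℝ) : ℝ :=
  (b * Real.cos θ - a * Real.sin θ)^2 + (d * Real.cos θ - c * Real.sin θ)^2

lemma hasDerivAt_lin (a b θ : ℝ) :
    HasDerivAt (fun θ => a * Real.cos θ + b * Real.sin θ) (b * Real.cos θ - a * Real.sin θ) θ := by
  have := ((Real.hasDerivAt_cos θ).const_mul a).add ((Real.hasDerivAt_sin θ).const_mul b)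
  exact this.congr_deriv (by ring)

lemma hasDerivAt_lin' (a b θ : ℝ) :
    HasDerivAt (fun θ => b * Real.cos θ - a * Real.sin θ)
      (-(a * Real.cos θ + b * Real.sin θ)) θ := by
  have h := hasDerivAt_lin b (-a) θ
  have hf : (fun θ => b * Real.cos θ + -a * Real.sin θ)
      = (fun θ => b * Real.cos θ - a * Real.sin θ) := by funext t; ring
  rw [hf] at h; convert h using 1; ring

lemma hasDerivAt_Qf (a b c d θ : ℝ) :
    HasDerivAt (Qf a b c d) (2 * Wf a b c d θ) θ := by
  have := ((hasDerivAt_lin a b θ).pow 2).add ((hasDerivAt_lin c d θ).pow 2)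
  exact this.congr_deriv (by simp [Wf]; ring)

lemma hasDerivAt_Pf (a b c d θ : ℝ) :
    HasDerivAt (Pf a b c d) (-2 * Wf a b c d θ) θ := by
  have := ((hasDerivAt_lin' a b θ).pow 2).add ((hasDerivAt_lin' c d θ).pow 2)
  exact this.congr_deriv (by simp [Wf]; ring)

lemma hasDerivAt_Wf (a b c d θ : ℝ) :
    HasDerivAt (Wf a b c d) (Pf a b c d θ - Qf a b c d θ) θ := by
  have := ((hasDerivAt_lin a b θ).mul (hasDerivAt_lin' a b θ)).add
    ((hasDerivAt_lin c d θ).mul (hasDerivAt_lin' c d θ))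
  exact this.congr_deriv (by simp [Pf, Qf]; ring)

lemma detrot (a b c d θ : ℝ) (h : a * d - b * c = 1) :
    (a * Real.cos θ + b * Real.sin θ) * (d * Real.cos θ - c * Real.sin θ)
      - (b * Real.cos θ - a * Real.sin θ) * (c * Real.cos θ + d * Real.sin θ) = 1 := by
  have hs := Real.sin_sq_add_cos_sq θ
  linear_combination (a*d - b*c) * hs + h

lemma lagrange (a b c d θ : ℝ) (h : a * d - b * c = 1) :
    Qf a b c d θ * Pf a b c d θ = 1 + (Wf a b c d θ)^2 := by
  have hdet := detrot a b c d θ h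
  simp only [Qf, Pf, Wf]
  nlinarith [hdet]

lemma opNorm2_bound (a b c d p q : ℝ) (h : p^2 + q^2 = 1) :
    (a*p + b*q)^2 + (c*p + d*q)^2 ≤ (opNorm2 !![a,b;c,d])^2 := by
  set g : Matrix (Fin 2) (Fin 2) ℝ := !![a,b;c,d]
  set v : EuclideanSpace ℝ (Fin 2) := (WithLp.equiv 2 (Fin 2 → ℝ)).symm ![p, q]
  have hv : ‖v‖ = 1 := by
    simp [EuclideanSpace.norm_eq, v, Fin.sum_univ_two, WithLp.equiv_symm_apply]
    rw [← h]
  have hle := (LinearMap.toContinuousLinearMap (Matrix.toEuclideanLin g)).le_opNorm v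
  rw [hv, mul_one, LinearMap.coe_toContinuousLinearMap'] at hle
  have happ : (Matrix.toEuclideanLin g) v
      = (WithLp.equiv 2 (Fin 2 → ℝ)).symm ![a*p + b*q, c*p + d*q] := by
    rw [Matrix.toEuclideanLin_apply]
    congr 1
    simp [g, Matrix.mulVec, dotProduct, Fin.sum_univ_two]
    simp [v, WithLp.equiv_symm_apply]
  have hnorm : ‖(Matrix.toEuclideanLin g) v‖ = Real.sqrt ((a*p + b*q)^2 + (c*p + d*q)^2) := by
    rw [happ]
    simp [EuclideanSpace.norm_eq, Fin.sum_univ_two, sq_abs, WithLp.equiv_symm_apply]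
  rw [hnorm] at hle
  have h0 : 0 ≤ (a*p + b*q)^2 + (c*p + d*q)^2 := by positivity
  calc (a*p + b*q)^2 + (c*p + d*q)^2
      = (Real.sqrt ((a*p + b*q)^2 + (c*p + d*q)^2))^2 := (Real.sq_sqrt h0).symm
    _ ≤ (opNorm2 g)^2 := pow_le_pow_left₀ (Real.sqrt_nonneg _) hle 2

lemma Qf_le (a b c d θ : ℝ) : Qf a b c d θ ≤ (opNorm2 !![a,b;c,d])^2 := by
  have := opNorm2_bound a b c d (Real.cos θ) (Real.sin θ)
    (by rw [← Real.cos_sq_add_sin_sq θ])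
  simpa [Qf] using this

lemma Pf_le (a b c d θ : ℝ) : Pf a b c d θ ≤ (opNorm2 !![a,b;c,d])^2 := by
  have hu : (-Real.sin θ)^2 + (Real.cos θ)^2 = 1 := by
    rw [neg_pow]; simpa using Real.sin_sq_add_cos_sq θ
  have := opNorm2_bound a b c d (-Real.sin θ) (Real.cos θ) hu
  have e : (a*(-Real.sin θ) + b*Real.cos θ)^2 + (c*(-Real.sin θ) + d*Real.cos θ)^2
      = Pf a b c d θ := by simp [Pf]; ring
  linarith [this, e.symm.le]

lemma Qf_pos (a b c d θ : ℝ) (h : a * d - b * c = 1) : 0 < Qf a b c d θ := by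
  have hL := lagrange a b c d θ h
  have hP : 0 ≤ Pf a b c d θ := by simp only [Pf]; positivity
  have hQ : 0 ≤ Qf a b c d θ := by simp only [Qf]; positivity
  nlinarith [sq_nonneg (Wf a b c d θ)]

lemma opNorm2_ge_one (a b c d : ℝ) (h : a * d - b * c = 1) :
    1 ≤ opNorm2 !![a,b;c,d] := by
  have hL := lagrange a b c d 0 h
  have h1 := Qf_le a b c d 0
  have h2 := Pf_le a b c d 0
  have hN : 0 ≤ opNorm2 !![a,b;c,d] := norm_nonneg _
  have hQ : 0 ≤ Qf a b c d 0 := by simp only [Qf]; positivity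
  have hP : 0 ≤ Pf a b c d 0 := by simp only [Pf]; positivity
  have h4 : 1 ≤ (opNorm2 !![a,b;c,d])^4 := by nlinarith [sq_nonneg (Wf a b c d 0)]
  by_contra hc
  push_neg at hc
  have := pow_lt_one₀ hN hc (n := 4) (by norm_num)
  linarith

lemma A_bound (a b c d θ : ℝ) (h : a * d - b * c = 1) :
    |(Qf a b c d θ)⁻¹| ≤ (opNorm2 !![a,b;c,d])^2 := by
  have hQ := Qf_pos a b c d θ h
  have hL := lagrange a b c d θ h
  have hP := Pf_le a b c d θ
  rw [abs_of_pos (inv_pos.mpr hQ), inv_eq_one_div, div_le_iff₀ hQ]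
  nlinarith [sq_nonneg (Wf a b c d θ)]

lemma B_bound (a b c d θ : ℝ) (h : a * d - b * c = 1) :
    |Wf a b c d θ / Qf a b c d θ| ≤ (opNorm2 !![a,b;c,d])^2 := by
  have hQ := Qf_pos a b c d θ h
  have hL := lagrange a b c d θ h
  have hP := Pf_le a b c d θ
  have hA := A_bound a b c d θ h
  rw [abs_of_pos (inv_pos.mpr hQ)] at hA
  have hN : 0 ≤ (opNorm2 !![a,b;c,d])^2 := by positivity
  have hsq : (Wf a b c d θ / Qf a b c d θ)^2 ≤ ((opNorm2 !![a,b;c,d])^2)^2 := by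
    rw [div_pow, div_le_iff₀ (by positivity)]
    have hQinv : (Qf a b c d θ)⁻¹ * Qf a b c d θ = 1 := inv_mul_cancel₀ hQ.ne'
    have h1 : (1:ℝ) ≤ (opNorm2 !![a,b;c,d])^2 * Qf a b c d θ := by
      calc (1:ℝ) = (Qf a b c d θ)⁻¹ * Qf a b c d θ := hQinv.symm
        _ ≤ (opNorm2 !![a,b;c,d])^2 * Qf a b c d θ :=
            mul_le_mul_of_nonneg_right hA hQ.le
    have h2 : Wf a b c d θ^2 ≤ Qf a b c d θ * (opNorm2 !![a,b;c,d])^2 := by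
      nlinarith [mul_le_mul_of_nonneg_left hP hQ.le]
    nlinarith [mul_le_mul_of_nonneg_left h1 (le_trans zero_le_one h1)]
  nlinarith [abs_nonneg (Wf a b c d θ / Qf a b c d θ), sq_abs (Wf a b c d θ / Qf a b c d θ)]

lemma C_bound (a b c d θ : ℝ) (h : a * d - b * c = 1) :
    |Pf a b c d θ / Qf a b c d θ| ≤ (opNorm2 !![a,b;c,d])^4 := by
  have hQ := Qf_pos a b c d θ h
  have hP := Pf_le a b c d θ
  have hA := A_bound a b c d θ h
  rw [abs_of_pos (inv_pos.mpr hQ)] at hA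
  have hP0 : 0 ≤ Pf a b c d θ := by simp only [Pf]; positivity
  rw [abs_of_nonneg (div_nonneg hP0 hQ.le), div_le_iff₀ hQ]
  have hQinv : (Qf a b c d θ)⁻¹ * Qf a b c d θ = 1 := inv_mul_cancel₀ hQ.ne'
  have h1 : (1:ℝ) ≤ (opNorm2 !![a,b;c,d])^2 * Qf a b c d θ := by
    calc (1:ℝ) = (Qf a b c d θ)⁻¹ * Qf a b c d θ := hQinv.symm
      _ ≤ (opNorm2 !![a,b;c,d])^2 * Qf a b c d θ :=
          mul_le_mul_of_nonneg_right hA hQ.le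
  nlinarith [mul_le_mul_of_nonneg_left h1 (sq_nonneg (opNorm2 !![a,b;c,d]))]

noncomputable def mval (a b c d : ℝ) (m : ℝ × ℕ × ℕ) (θ : ℝ) : ℝ :=
  m.1 * (Qf a b c d θ)⁻¹ * (Wf a b c d θ / Qf a b c d θ)^m.2.1
    * (Pf a b c d θ / Qf a b c d θ)^m.2.2

def dMono (m : ℝ × ℕ × ℕ) : List (ℝ × ℕ × ℕ) :=
  [(-2*m.1, m.2.1+1, m.2.2),
   (m.1*m.2.1, m.2.1-1, m.2.2+1),
   (-(m.1*m.2.1), m.2.1-1, m.2.2),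
   (-2*m.1*m.2.1, m.2.1+1, m.2.2),
   (-2*m.1*m.2.2, m.2.1+1, m.2.2-1),
   (-2*m.1*m.2.2, m.2.1+1, m.2.2)]

noncomputable def lval (a b c d : ℝ) (L : List (ℝ × ℕ × ℕ)) (θ : ℝ) : ℝ :=
  (L.map (fun m => mval a b c d m θ)).sum

lemma hasDerivAt_A (a b c d θ : ℝ) (h : a * d - b * c = 1) :
    HasDerivAt (fun θ => (Qf a b c d θ)⁻¹)
      (-2 * (Wf a b c d θ / Qf a b c d θ) * (Qf a b c d θ)⁻¹) θ := by
  have hQ := (Qf_pos a b c d θ h).ne'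
  have := (hasDerivAt_Qf a b c d θ).inv hQ
  refine this.congr_deriv ?_
  field_simp

lemma hasDerivAt_B (a b c d θ : ℝ) (h : a * d - b * c = 1) :
    HasDerivAt (fun θ => Wf a b c d θ / Qf a b c d θ)
      (Pf a b c d θ / Qf a b c d θ - 1 - 2 * (Wf a b c d θ / Qf a b c d θ)^2) θ := by
  have hQ := (Qf_pos a b c d θ h).ne'
  have := (hasDerivAt_Wf a b c d θ).div (hasDerivAt_Qf a b c d θ) hQ
  refine this.congr_deriv ?_
  field_simp

lemma hasDerivAt_C (a b c d θ : ℝ) (h : a * d - b * c = 1) :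
    HasDerivAt (fun θ => Pf a b c d θ / Qf a b c d θ)
      (-2 * (Wf a b c d θ / Qf a b c d θ)
        - 2 * (Wf a b c d θ / Qf a b c d θ) * (Pf a b c d θ / Qf a b c d θ)) θ := by
  have hQ := (Qf_pos a b c d θ h).ne'
  have := (hasDerivAt_Pf a b c d θ).div (hasDerivAt_Qf a b c d θ) hQ
  refine this.congr_deriv ?_
  field_simp

lemma hasDerivAt_mval (a b c d θ : ℝ) (h : a * d - b * c = 1) (m : ℝ × ℕ × ℕ) :
    HasDerivAt (fun θ => mval a b c d m θ) (lval a b c d (dMono m) θ) θ := by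
  obtain ⟨co, j, l⟩ := m
  have hd := (((hasDerivAt_A a b c d θ h).const_mul co).mul
      ((hasDerivAt_B a b c d θ h).pow j)).mul ((hasDerivAt_C a b c d θ h).pow l)
  refine hd.congr_deriv ?_
  set A := (Qf a b c d θ)⁻¹
  set B := Wf a b c d θ / Qf a b c d θ
  set C := Pf a b c d θ / Qf a b c d θ
  show _ = lval a b c d (dMono (co, j, l)) θ
  rcases j with _ | j <;> rcases l with _ | l <;>
    simp [dMono, lval, mval, Nat.succ_sub_one, -neg_mul] <;> push_cast <;> ring

lemma hasDerivAt_lval (a b c d θ : ℝ) (h : a * d - b * c = 1) (L : List (ℝ × ℕ × ℕ)) :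
    HasDerivAt (fun θ => lval a b c d L θ) (lval a b c d (L.flatMap dMono) θ) θ := by
  induction L with
  | nil => simpa [lval] using hasDerivAt_const θ (0:ℝ)
  | cons m L ih =>
      have := (hasDerivAt_mval a b c d θ h m).add ih
      have e1 : (fun θ => lval a b c d (m :: L) θ)
          = fun θ => mval a b c d m θ + lval a b c d L θ := by
        funext t; simp [lval]
      have e2 : lval a b c d ((m :: L).flatMap dMono) θ
          = lval a b c d (dMono m) θ + lval a b c d (L.flatMap dMono) θ := by
        simp [lval, List.flatMap_cons]
      rw [e1, e2]
      exact this

def wt (m : ℝ × ℕ × ℕ) : ℕ := 1 + m.2.1 + 2 * m.2.2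

lemma rep (k : ℕ) : ∃ L : List (ℝ × ℕ × ℕ),
    (∀ m ∈ L, m.1 = 0 ∨ wt m ≤ k + 1) ∧
    ∀ a b c d : ℝ, a * d - b * c = 1 → ∀ θ : ℝ,
      iteratedDeriv k (fun θ => (Qf a b c d θ)⁻¹) θ = lval a b c d L θ := by
  induction k with
  | zero =>
      refine ⟨[(1, 0, 0)], ?_, ?_⟩
      · intro m hm; simp at hm; subst hm; right; simp [wt]
      · intro a b c d h θ; simp [lval, mval]
  | succ k ih =>
      obtain ⟨L, hw, he⟩ := ih
      refine ⟨L.flatMap dMono, ?_, ?_⟩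
      · intro m' hm'
        rw [List.mem_flatMap] at hm'
        obtain ⟨m, hmL, hm'⟩ := hm'
        obtain ⟨co, j, l⟩ := m
        have hbase : co = 0 ∨ 1 + j + 2 * l ≤ k + 1 := by
          rcases hw _ hmL with h0 | hwm
          · left; exact h0
          · right; simpa [wt] using hwm
        simp [dMono] at hm'
        rcases hm' with rfl|rfl|rfl|rfl|rfl|rfl
        · rcases hbase with h0|h0
          · left; simp [h0]
          · right; simp only [wt]; omega
        · rcases Nat.eq_zero_or_pos j with hj|hj
          · left; simp [hj]
          · rcases hbase with h0|h0
            · left; simp [h0]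
            · right; simp only [wt]; omega
        · rcases Nat.eq_zero_or_pos j with hj|hj
          · left; simp [hj]
          · rcases hbase with h0|h0
            · left; simp [h0]
            · right; simp only [wt]; omega
        · rcases hbase with h0|h0
          · left; simp [h0]
          · right; simp only [wt]; omega
        · rcases Nat.eq_zero_or_pos l with hl|hl
          · left; simp [hl]
          · rcases hbase with h0|h0
            · left; simp [h0]
            · right; simp only [wt]; omega
        · rcases hbase with h0|h0
          · left; simp [h0]
          · right; simp only [wt]; omega
      · intro a b c d h θ
        rw [iteratedDeriv_succ]
        have hfun : iteratedDeriv k (fun θ => (Qf a b c d θ)⁻¹)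
            = fun θ => lval a b c d L θ := funext (he a b c d h)
        rw [hfun]
        exact (hasDerivAt_lval a b c d θ h L).deriv

lemma mval_bound (a b c d θ : ℝ) (h : a * d - b * c = 1) (m : ℝ × ℕ × ℕ) (k : ℕ)
    (hm : m.1 = 0 ∨ wt m ≤ k + 1) :
    |mval a b c d m θ| ≤ |m.1| * (opNorm2 !![a,b;c,d]) ^ (2 * (k + 1)) := by
  obtain ⟨co, j, l⟩ := m
  rcases hm with h0 | hwm
  · simp at h0; subst h0; simp [mval]
  · set N := opNorm2 !![a,b;c,d] with hN
    have hN1 : 1 ≤ N := opNorm2_ge_one a b c d h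
    have hA := A_bound a b c d θ h
    have hB := B_bound a b c d θ h
    have hC := C_bound a b c d θ h
    have : |mval a b c d (co, j, l) θ| ≤ |co| * (N^2 * (N^2)^j * (N^4)^l) := by
      simp only [mval, abs_mul, abs_pow]
      have h1 : |Wf a b c d θ / Qf a b c d θ|^j ≤ (N^2)^j :=
        pow_le_pow_left₀ (abs_nonneg _) hB j
      have h2 : |Pf a b c d θ / Qf a b c d θ|^l ≤ (N^4)^l :=
        pow_le_pow_left₀ (abs_nonneg _) hC l
      have hNpos : (0:ℝ) ≤ N := le_trans zero_le_one hN1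
      calc |co| * |(Qf a b c d θ)⁻¹| * |Wf a b c d θ / Qf a b c d θ|^j
            * |Pf a b c d θ / Qf a b c d θ|^l
          ≤ |co| * (N^2) * (N^2)^j * (N^4)^l := by
            apply mul_le_mul (mul_le_mul (mul_le_mul le_rfl hA (abs_nonneg _) (abs_nonneg _))
              h1 (pow_nonneg (abs_nonneg _) j) (by positivity)) h2
              (pow_nonneg (abs_nonneg _) l) (by positivity)
        _ = |co| * (N^2 * (N^2)^j * (N^4)^l) := by ring
    refine this.trans ?_
    have hNpos : (0:ℝ) ≤ N := le_trans zero_le_one hN1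
    have hexp : N^2 * (N^2)^j * (N^4)^l = N ^ (2 * wt (co, j, l)) := by
      rw [← pow_mul, ← pow_mul, ← pow_add, ← pow_add]
      congr 1
      simp [wt]; ring
    rw [hexp]
    apply mul_le_mul_of_nonneg_left _ (abs_nonneg _)
    exact pow_le_pow_right₀ hN1 (by omega)

lemma lval_bound (a b c d θ : ℝ) (h : a * d - b * c = 1) (L : List (ℝ × ℕ × ℕ)) (k : ℕ)
    (hw : ∀ m ∈ L, m.1 = 0 ∨ wt m ≤ k + 1) :
    |lval a b c d L θ| ≤ (L.map (fun m => |m.1|)).sum * (opNorm2 !![a,b;c,d]) ^ (2 * (k + 1)) := by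
  induction L with
  | nil => simp [lval]
  | cons m L ih =>
      have h1 := mval_bound a b c d θ h m k (hw m (by simp))
      have h2 := ih (fun m' hm' => hw m' (by simp [hm']))
      have e : lval a b c d (m :: L) θ = mval a b c d m θ + lval a b c d L θ := by
        simp [lval]
      rw [e]
      calc |mval a b c d m θ + lval a b c d L θ|
          ≤ |mval a b c d m θ| + |lval a b c d L θ| := abs_add_le _ _
        _ ≤ |m.1| * (opNorm2 !![a,b;c,d]) ^ (2 * (k + 1))
            + (L.map (fun m => |m.1|)).sum * (opNorm2 !![a,b;c,d]) ^ (2 * (k + 1)) :=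
            add_le_add h1 h2
        _ = ((m :: L).map (fun m => |m.1|)).sum * (opNorm2 !![a,b;c,d]) ^ (2 * (k + 1)) := by
            simp; ring
lemma deriv_tau (a b c d : ℝ) (h : a * d - b * c = 1) (τ : ℝ → ℝ) (hτ : ContDiff ℝ (⊤ : ℕ∞) τ)
    (hexp : ∀ θ : ℝ, Complex.exp ((τ θ : ℂ) * Complex.I) =
      (((a * Real.cos θ + b * Real.sin θ : ℝ) : ℂ) +
        ((c * Real.cos θ + d * Real.sin θ : ℝ) : ℂ) * Complex.I) /
      ((Real.sqrt ((a * Real.cos θ + b * Real.sin θ) ^ 2 +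
        (c * Real.cos θ + d * Real.sin θ) ^ 2) : ℝ) : ℂ)) (θ : ℝ) :
    HasDerivAt τ (Qf a b c d θ)⁻¹ θ := by
  have hQpos := Qf_pos a b c d θ h
  set x : ℝ → ℝ := fun t => a * Real.cos t + b * Real.sin t with hxdef
  set y : ℝ → ℝ := fun t => c * Real.cos t + d * Real.sin t with hydef
  have hQeq : ∀ t, Qf a b c d t = x t ^ 2 + y t ^ 2 := fun t => rfl
  have hspos : 0 < Real.sqrt (Qf a b c d θ) := Real.sqrt_pos.mpr hQpos
  -- derivative of the left side
  have ht : HasDerivAt τ (deriv τ θ) θ :=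
    (hτ.differentiable (by simp) θ).hasDerivAt
  have hL : HasDerivAt (fun t => Complex.exp ((τ t : ℂ) * Complex.I))
      (Complex.exp ((τ θ : ℂ) * Complex.I) * (((deriv τ θ : ℝ) : ℂ) * Complex.I)) θ :=
    ((ht.ofReal_comp).mul_const Complex.I).cexp
  -- derivative of the right side
  have hx : HasDerivAt (fun t => ((x t : ℝ) : ℂ))
      ((b * Real.cos θ - a * Real.sin θ : ℝ) : ℂ) θ := (hasDerivAt_lin a b θ).ofReal_comp
  have hy : HasDerivAt (fun t => ((y t : ℝ) : ℂ))
      ((d * Real.cos θ - c * Real.sin θ : ℝ) : ℂ) θ := (hasDerivAt_lin c d θ).ofReal_comp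
  have hnum : HasDerivAt (fun t => ((x t : ℝ) : ℂ) + ((y t : ℝ) : ℂ) * Complex.I)
      (((b * Real.cos θ - a * Real.sin θ : ℝ) : ℂ)
        + ((d * Real.cos θ - c * Real.sin θ : ℝ) : ℂ) * Complex.I) θ :=
    hx.add (hy.mul_const Complex.I)
  have hQR : HasDerivAt (fun t => Real.sqrt (Qf a b c d t))
      (2 * Wf a b c d θ / (2 * Real.sqrt (Qf a b c d θ))) θ :=
    (hasDerivAt_Qf a b c d θ).sqrt hQpos.ne'
  have hden : HasDerivAt (fun t => ((Real.sqrt (Qf a b c d t) : ℝ) : ℂ))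
      ((2 * Wf a b c d θ / (2 * Real.sqrt (Qf a b c d θ)) : ℝ) : ℂ) θ := hQR.ofReal_comp
  have hden0 : ((Real.sqrt (Qf a b c d θ) : ℝ) : ℂ) ≠ 0 := by
    exact_mod_cast hspos.ne'
  have hR : HasDerivAt (fun t => (((x t : ℝ) : ℂ) + ((y t : ℝ) : ℂ) * Complex.I)
      / ((Real.sqrt (Qf a b c d t) : ℝ) : ℂ))
      (((((b * Real.cos θ - a * Real.sin θ : ℝ) : ℂ)
        + ((d * Real.cos θ - c * Real.sin θ : ℝ) : ℂ) * Complex.I)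
        * ((Real.sqrt (Qf a b c d θ) : ℝ) : ℂ)
        - (((x θ : ℝ) : ℂ) + ((y θ : ℝ) : ℂ) * Complex.I)
          * ((2 * Wf a b c d θ / (2 * Real.sqrt (Qf a b c d θ)) : ℝ) : ℂ))
        / ((Real.sqrt (Qf a b c d θ) : ℝ) : ℂ) ^ 2) θ := hnum.div hden hden0
  -- the two functions are equal
  have hfun : (fun t => Complex.exp ((τ t : ℂ) * Complex.I))
      = fun t => (((x t : ℝ) : ℂ) + ((y t : ℝ) : ℂ) * Complex.I)
        / ((Real.sqrt (Qf a b c d t) : ℝ) : ℂ) := by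
    funext t; exact hexp t
  rw [hfun] at hL
  have E := hL.unique hR
  rw [hexp θ] at E
  -- now extract the real derivative
  have hs2 : ((Real.sqrt (Qf a b c d θ) : ℝ) : ℂ) ^ 2 = ((Qf a b c d θ : ℝ) : ℂ) := by
    norm_cast
    exact Real.sq_sqrt hQpos.le
  have hdet : x θ * (d * Real.cos θ - c * Real.sin θ)
      - (b * Real.cos θ - a * Real.sin θ) * y θ = 1 := detrot a b c d θ h
  have hWeq : Wf a b c d θ = x θ * (b * Real.cos θ - a * Real.sin θ)
      + y θ * (d * Real.cos θ - c * Real.sin θ) := rfl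
  have key : ((deriv τ θ : ℝ) : ℂ) * ((Qf a b c d θ : ℝ) : ℂ) = 1 := by
    have hQ0 : ((Qf a b c d θ : ℝ) : ℂ) ≠ 0 := by exact_mod_cast hQpos.ne'
    have erw : Real.sqrt ((a * Real.cos θ + b * Real.sin θ) ^ 2 +
        (c * Real.cos θ + d * Real.sin θ) ^ 2) = Real.sqrt (Qf a b c d θ) := rfl
    rw [erw] at E
    have ex : ((a * Real.cos θ + b * Real.sin θ : ℝ) : ℂ) = ((x θ : ℝ) : ℂ) := rfl
    have ey : ((c * Real.cos θ + d * Real.sin θ : ℝ) : ℂ) = ((y θ : ℝ) : ℂ) := rfl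
    rw [ex, ey] at E
    set dV := deriv τ θ with hdV
    set QV := Qf a b c d θ with hQV
    set WV := Wf a b c d θ with hWV
    set SV := Real.sqrt QV with hSV
    set XV := x θ with hXV
    set YV := y θ with hYV
    set XD := b * Real.cos θ - a * Real.sin θ with hXD
    set YD := d * Real.cos θ - c * Real.sin θ with hYD
    have hSne : (SV:ℂ) ≠ 0 := hden0
    push_cast at E
    field_simp at E
    have hs2' : ((SV:ℝ) : ℂ) ^ 2 = ((QV : ℝ) : ℂ) := hs2
    have hQC : ((QV:ℝ):ℂ) = ((XV:ℝ):ℂ)^2 + ((YV:ℝ):ℂ)^2 := by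
      exact_mod_cast congrArg (fun r : ℝ => (r : ℂ)) (hQeq θ)
    have hdetC : ((XV:ℝ):ℂ) * ((YD:ℝ):ℂ) - ((XD:ℝ):ℂ) * ((YV:ℝ):ℂ) = 1 := by
      exact_mod_cast congrArg (fun r : ℝ => (r : ℂ)) hdet
    have hWC : ((WV:ℝ):ℂ) = ((XV:ℝ):ℂ) * ((XD:ℝ):ℂ) + ((YV:ℝ):ℂ) * ((YD:ℝ):ℂ) := by
      exact_mod_cast congrArg (fun r : ℝ => (r : ℂ)) hWeq
    have hIsq : Complex.I ^ 2 = -1 := Complex.I_sq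
    have E2 : (((XV:ℝ):ℂ) + ((YV:ℝ):ℂ) * Complex.I) * (((dV:ℝ):ℂ) * Complex.I) * ((QV:ℝ):ℂ)
        = (((XD:ℝ):ℂ) + ((YD:ℝ):ℂ) * Complex.I) * ((QV:ℝ):ℂ)
          - (((XV:ℝ):ℂ) + ((YV:ℝ):ℂ) * Complex.I) * ((WV:ℝ):ℂ) := by
      apply mul_right_cancel₀ (mul_ne_zero two_ne_zero hSne)
      linear_combination 2*((SV:ℝ):ℂ) * E + (2*((SV:ℝ):ℂ)*(((XD:ℝ):ℂ) + ((YD:ℝ):ℂ)*Complex.I)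
        - 2*((SV:ℝ):ℂ)*(((XV:ℝ):ℂ) + ((YV:ℝ):ℂ)*Complex.I)*((dV:ℝ):ℂ)*Complex.I) * hs2'
    have key3 : (((dV:ℝ):ℂ) * ((QV:ℝ):ℂ)) * (((QV:ℝ):ℂ) * Complex.I)
        = 1 * (((QV:ℝ):ℂ) * Complex.I) := by
      linear_combination (((XV:ℝ):ℂ) - ((YV:ℝ):ℂ)*Complex.I) * E2
        + (((dV:ℝ):ℂ)*Complex.I*((QV:ℝ):ℂ) + ((WV:ℝ):ℂ)) * hQC
        + (Complex.I*((QV:ℝ):ℂ)) * hdetC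
        + (-((QV:ℝ):ℂ)) * hWC
        + (((dV:ℝ):ℂ)*Complex.I*((QV:ℝ):ℂ)*((YV:ℝ):ℂ)^2
            - ((QV:ℝ):ℂ)*((YV:ℝ):ℂ)*((YD:ℝ):ℂ) + ((WV:ℝ):ℂ)*((YV:ℝ):ℂ)^2) * hIsq
    exact mul_right_cancel₀ (mul_ne_zero hQ0 Complex.I_ne_zero) key3
  have : deriv τ θ = (Qf a b c d θ)⁻¹ := by
    have h2 : ((deriv τ θ : ℝ) : ℂ) = (((Qf a b c d θ)⁻¹ : ℝ) : ℂ) := by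
      push_cast
      exact eq_inv_of_mul_eq_one_left key
    exact_mod_cast h2
  rw [← this]; exact ht

/-- For `g = [[a,b],[c,d]] ∈ SL₂(ℝ)` and the projective action `τ_g` on angles
(characterized by `e^{iτ_g(θ)} = ((a cos θ + b sin θ) + i(c cos θ + d sin θ))/‖·‖`),
the `s`-th derivative satisfies `|τ_g^{(s)}(θ)| ≤ c_s ‖g‖^{2s}` for all `θ`
and `s ≥ 1`, with `c_s` depending only on `s`. -/
theorem stmt17 (s : ℕ) (hs : 1 ≤ s) :
    ∃ cs : ℝ, 0 < cs ∧
      ∀ (a b c d : ℝ), a * d - b * c = 1 →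
        ∀ τ : ℝ → ℝ, ContDiff ℝ (⊤ : ℕ∞) τ →
          (∀ θ : ℝ, Complex.exp ((τ θ : ℂ) * Complex.I) =
            (((a * Real.cos θ + b * Real.sin θ : ℝ) : ℂ) +
              ((c * Real.cos θ + d * Real.sin θ : ℝ) : ℂ) * Complex.I) /
            ((Real.sqrt ((a * Real.cos θ + b * Real.sin θ) ^ 2 +
              (c * Real.cos θ + d * Real.sin θ) ^ 2) : ℝ) : ℂ)) →
          ∀ θ : ℝ, |iteratedDeriv s τ θ| ≤ cs * (opNorm2 !![a, b; c, d]) ^ (2 * s) := by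
  obtain ⟨k, rfl⟩ : ∃ k, s = k + 1 := ⟨s - 1, (Nat.succ_pred_eq_of_pos hs).symm⟩
  obtain ⟨L, hw, he⟩ := rep k
  refine ⟨(L.map (fun m => |m.1|)).sum + 1, ?_, ?_⟩
  · have : 0 ≤ (L.map (fun m => |m.1|)).sum :=
      List.sum_nonneg (by intro r hr; simp at hr; obtain ⟨m, -, rfl⟩ := hr; exact abs_nonneg _)
    linarith
  · intro a b c d h τ hτ hexp θ
    have hderiv : deriv τ = fun t => (Qf a b c d t)⁻¹ :=
      funext fun t => (deriv_tau a b c d h τ hτ hexp t).deriv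
    rw [iteratedDeriv_succ', hderiv, he a b c d h θ]
    have hb := lval_bound a b c d θ h L k hw
    have hN1 : 1 ≤ opNorm2 !![a,b;c,d] := opNorm2_ge_one a b c d h
    have hpow : 0 ≤ (opNorm2 !![a,b;c,d]) ^ (2 * (k + 1)) := by positivity
    calc |lval a b c d L θ|
        ≤ (L.map (fun m => |m.1|)).sum * (opNorm2 !![a,b;c,d]) ^ (2 * (k + 1)) := hb
      _ ≤ ((L.map (fun m => |m.1|)).sum + 1) * (opNorm2 !![a,b;c,d]) ^ (2 * (k + 1)) := by
          apply mul_le_mul_of_nonneg_right _ hpow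
          linarith
end
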